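/- The function R_2(t) = \frac{1}{2}\sqrt{\frac{(1+4t)e^{4t} - (2+4t+12t^2+8t^3)e^{2t} + 1}{t^2((2t+1)e^{2t}-1)^2}} satisfies R_2(t) = \frac{1}{2t^{3/2}} + O(t^{-2}) as t \to \infty. -/

import Mathlib

open Filter Asymptotics

noncomputable def R2 (t : ℝ) : ℝ :=
  (1 / 2) * Real.sqrt
    (((1 + 4 * t) * Real.exp (4 * t)
        - (2 + 4 * t + 12 * t ^ 2 + 8 * t ^ 3) * Real.exp (2 * t) + 1) /
      (t ^ 2 * ((2 * t + 1) * Real.exp (2 * t) - 1) ^ 2))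

/-!
With `E = e^{2t}`, the radicand of `R2 t` is `N / (t² A²)` where `A = (2t+1)E - 1` and `N` is the
quadratic polynomial in `E` of the numerator, so `R2 t = √u / (2 t^{3/2})` with `u = t N / A²`.
The leading terms are `t N ≈ 4t² E²` and `A² ≈ 4t² E²`; the remaining terms of `t N - A²` are
`O(t E²)` once `E` beats `t³`, which `E ≥ (2t)⁴ / 4!` guarantees, so `|u - 1| ≤ 2 / t` for `t ≥ 4`.
Since `|√u - 1| ≤ |u - 1|`, the error is at most `t^{-5/2} ≤ t^{-2}`.
-/

open Real

lemma abs_sqrt_sub_one_le {u : ℝ} (hu : 0 ≤ u) : |√u - 1| ≤ |u - 1| := by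
  have hfactor : u - 1 = (√u - 1) * (√u + 1) := by nlinarith [sq_sqrt hu]
  rw [hfactor, abs_mul]
  exact le_mul_of_one_le_right (abs_nonneg _)
    (le_abs.mpr (Or.inl (by linarith [sqrt_nonneg u])))

lemma two_mul_pow_four_div_three_le_exp {t : ℝ} (ht : 0 ≤ t) : 2 * t ^ 4 / 3 ≤ exp (2 * t) := by
  have h := pow_div_factorial_le_exp _ (by positivity : 0 ≤ 2 * t) 4
  norm_num [Nat.factorial] at h
  linarith

/-- `r2Num t E` and `r2Den t E` at `E = exp (2 * t)` are the numerator and the unsquared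
factor of the denominator in the radicand of `R2 t`. -/
def r2Num (t E : ℝ) : ℝ :=
  (1 + 4 * t) * E ^ 2 - (2 + 4 * t + 12 * t ^ 2 + 8 * t ^ 3) * E + 1

def r2Den (t E : ℝ) : ℝ := (2 * t + 1) * E - 1

lemma R2_eq_sqrt_div {t : ℝ} (ht : 0 < t) :
    R2 t = √(t * r2Num t (exp (2 * t)) / r2Den t (exp (2 * t)) ^ 2) /
      (2 * t ^ ((3 : ℝ) / 2)) := by
  have hexp : exp (4 * t) = exp (2 * t) ^ 2 := by rw [← exp_nat_mul]; ring_nf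
  have hpow : t ^ ((3 : ℝ) / 2) = √(t ^ 3) := by
    rw [sqrt_eq_rpow, ← rpow_natCast, ← rpow_mul ht.le]; norm_num
  have hdiv : r2Num t (exp (2 * t)) / (t ^ 2 * r2Den t (exp (2 * t)) ^ 2) =
      t * r2Num t (exp (2 * t)) / r2Den t (exp (2 * t)) ^ 2 / t ^ 3 := by
    field_simp
  rw [R2, hexp, hpow]
  change 1 / 2 * √(r2Num t (exp (2 * t)) / (t ^ 2 * r2Den t (exp (2 * t)) ^ 2)) = _
  rw [hdiv, sqrt_div' _ (by positivity)]
  ring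

lemma sub_two_mul_r2Den_sq_le {t E : ℝ} (ht : 4 ≤ t) (hE : 2 * t ^ 4 / 3 ≤ E) :
    (t - 2) * r2Den t E ^ 2 ≤ t ^ 2 * r2Num t E := by
  unfold r2Num r2Den
  have hE0 : 0 ≤ E := le_trans (by positivity) hE
  have hpoly : 8 * t ^ 5 + 12 * t ^ 4 + 4 * t ^ 3 + 6 * t + 4 ≤ 10 * t ^ 6 / 3 := by
    have h4 : (0:ℝ) ≤ t - 4 := by linarith
    have ht0 : (0:ℝ) ≤ t := by linarith
    nlinarith [mul_nonneg (pow_nonneg ht0 5) h4, mul_nonneg (pow_nonneg ht0 4) h4,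
      mul_nonneg (pow_nonneg ht0 3) h4, mul_nonneg (pow_nonneg ht0 2) h4, mul_nonneg ht0 h4]
  have h1 : 8 * t ^ 5 + 12 * t ^ 4 + 4 * t ^ 3 + 6 * t + 4 ≤ 5 * t ^ 2 * E := by
    nlinarith [mul_le_mul_of_nonneg_left hE (by positivity : (0:ℝ) ≤ 5 * t ^ 2)]
  nlinarith [mul_le_mul_of_nonneg_right h1 hE0]

lemma sq_mul_r2Num_le {t E : ℝ} (ht : 1 ≤ t) (hE : t ≤ E) :
    t ^ 2 * r2Num t E ≤ (t + 2) * r2Den t E ^ 2 := by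
  unfold r2Num r2Den
  have hcoeff : 0 ≤ 8 * t ^ 5 + 12 * t ^ 4 + 4 * t ^ 3 - 2 * t ^ 2 - 10 * t - 4 := by
    nlinarith [pow_le_pow_left₀ (by norm_num) ht 5, pow_le_pow_left₀ (by norm_num) ht 4,
      pow_le_pow_left₀ (by norm_num) ht 3]
  nlinarith [mul_nonneg hcoeff (by linarith : (0:ℝ) ≤ E),
    mul_le_mul hE hE (by linarith) (by linarith)]

lemma abs_mul_r2Num_div_sub_one_le {t E : ℝ} (ht : 4 ≤ t) (hE : 2 * t ^ 4 / 3 ≤ E) :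
    |t * r2Num t E / r2Den t E ^ 2 - 1| ≤ 2 / t := by
  have ht0 : 0 < t := by linarith
  have hden : 0 < r2Den t E ^ 2 := by
    have : 0 < r2Den t E := by unfold r2Den; nlinarith [pow_le_pow_left₀ (by norm_num) ht 4]
    positivity
  have hlower : (t - 2) / t ≤ t * r2Num t E / r2Den t E ^ 2 := by
    rw [div_le_div_iff₀ ht0 hden]; linarith [sub_two_mul_r2Den_sq_le ht hE]
  have hupper : t * r2Num t E / r2Den t E ^ 2 ≤ (t + 2) / t := by
    have hE_ge : t ≤ E := by nlinarith [pow_le_pow_left₀ (by norm_num) ht 3]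
    rw [div_le_div_iff₀ hden ht0]; linarith [sq_mul_r2Num_le (by linarith) hE_ge]
  rw [sub_div, div_self ht0.ne'] at hlower
  rw [add_div, div_self ht0.ne'] at hupper
  exact abs_sub_le_iff.mpr ⟨by linarith, by linarith⟩

lemma abs_R2_sub_le {t : ℝ} (ht : 4 ≤ t) :
    |R2 t - 1 / (2 * t ^ ((3 : ℝ) / 2))| ≤ t ^ (-(2 : ℝ)) := by
  have ht0 : 0 < t := by linarith
  set u := t * r2Num t (exp (2 * t)) / r2Den t (exp (2 * t)) ^ 2
  have hu : |u - 1| ≤ 2 / t :=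
    abs_mul_r2Num_div_sub_one_le ht (two_mul_pow_four_div_three_le_exp ht0.le)
  have hu0 : 0 ≤ u := by
    have : 2 / t ≤ 1 := by rw [div_le_one ht0]; linarith
    linarith [(abs_le.mp hu).1]
  have hpow : t ≤ t ^ ((3 : ℝ) / 2) := by
    simpa using rpow_le_rpow_of_exponent_le (by linarith : 1 ≤ t)
      (by norm_num : (1 : ℝ) ≤ 3 / 2)
  have hpow0 : 0 < 2 * t ^ ((3 : ℝ) / 2) := by positivity
  rw [R2_eq_sqrt_div ht0, ← sub_div, abs_div, abs_of_pos hpow0, rpow_neg ht0.le, rpow_two,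
    div_le_iff₀ hpow0]
  calc |√u - 1| ≤ 2 / t := (abs_sqrt_sub_one_le hu0).trans hu
    _ ≤ (t ^ 2)⁻¹ * (2 * t ^ ((3 : ℝ) / 2)) := by
      rw [div_le_iff₀ ht0]
      field_simp
      nlinarith

theorem stmt12 :
    (fun t : ℝ => R2 t - 1 / (2 * t ^ ((3 : ℝ) / 2)))
      =O[atTop] fun t : ℝ => t ^ (-(2 : ℝ)) := by
  refine IsBigO.of_bound 1 ?_
  filter_upwards [eventually_ge_atTop 4] with t ht
  rw [one_mul, norm_eq_abs, norm_of_nonneg (rpow_nonneg (by linarith) _)]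
  exact abs_R2_sub_le ht
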